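/- Let R be a commutative ring, A a commutative R-algebra, and L both a Lie algebra over R and an A-module, equipped with an R-linear anchor map ρ : L → Der_R(A) (R-linear derivations of A) satisfying the Leibniz rule ⁅X, a•Y⁆ = ρ(X)(a)•Y + a•⁅X,Y⁆ for all X, Y ∈ L and a ∈ A. Assume L is a faithful A-module: if a•Y = 0 for all Y ∈ L then a = 0. Suppose D : L → L is an R-linear map and φ ∈ Der_R(A) is a derivation such that (i) D(a•X) = φ(a)•X + a•D(X) for all a ∈ A, X ∈ L, and (ii) D(⁅X,Y⁆) = ⁅D(X),Y⁆ + ⁅X,D(Y)⁆ for all X, Y ∈ L. Then for every X ∈ L and a ∈ A, ρ(D(X))(a) = φ(ρ(X)(a)) − ρ(X)(φ(a)). -/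
import Mathlib


/-- For a Lie algebra `L` over `R` which is also a faithful `A`-module (for `A` a
commutative `R`-algebra), with an `R`-linear anchor `ρ : L → Der_R(A)` satisfying
the Leibniz rule, any `R`-linear `D : L → L` together with a derivation `φ` of `A`
satisfying `D(a•X) = φ(a)•X + a•D(X)` and acting as a derivation of the bracket
satisfies `ρ(D(X))(a) = φ(ρ(X)(a)) − ρ(X)(φ(a))`. -/
theorem anchor_of_morphic_operator {R A L : Type*} [CommRing R] [CommRing A] [Algebra R A]
    [LieRing L] [LieAlgebra R L] [Module A L]
    (ρ : L →ₗ[R] Derivation R A A)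
    (leib : ∀ (X Y : L) (a : A), ⁅X, a • Y⁆ = ρ X a • Y + a • ⁅X, Y⁆)
    (faithful : ∀ a : A, (∀ Y : L, a • Y = 0) → a = 0)
    (D : L →ₗ[R] L) (φ : Derivation R A A)
    (hD₁ : ∀ (a : A) (X : L), D (a • X) = φ a • X + a • D X)
    (hD₂ : ∀ X Y : L, D ⁅X, Y⁆ = ⁅D X, Y⁆ + ⁅X, D Y⁆)
    (X : L) (a : A) :
    ρ (D X) a = φ (ρ X a) - ρ X (φ a) := by

  have key : ∀ Y : L, (ρ (D X) a - (φ (ρ X a) - ρ X (φ a))) • Y = 0 := by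
    intro Y
    have h1 : D ⁅X, a • Y⁆ = ⁅D X, a • Y⁆ + ⁅X, D (a • Y)⁆ := hD₂ X (a • Y)
    rw [leib X Y a, map_add, hD₁ (ρ X a) Y, hD₁ a Y, hD₁ a ⁅X, Y⁆, hD₂ X Y,
      leib (D X) Y a, lie_add, leib X (D Y) a, leib X Y (φ a), smul_add] at h1
    linear_combination (norm := module) -h1
  have h := faithful _ key
  exact sub_eq_zero.mp h
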